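/- Let p, q > N-1 be real, 2 ≤ k ≤ N, and let x(t) solve dx_i/dt = (p-q) - (p+q)x_i + 2∑_{j≠i}(1 - x_i x_j)/(x_i - x_j) with pairwise distinct coordinates. Then d/dt e_k^N(x(t)) = k(-(p+q)+k-1)·e_k^N(x(t)) + (N-k+1)(p-q)·e_{k-1}^N(x(t)) - (N-k+2)(N-k+1)·e_{k-2}^N(x(t)). -/

import Mathlib

/-!
Along the flow, `d/dt e_k(x) = ∑ᵢ vᵢ e_{k-1}(x̂ᵢ)`, where `vᵢ` is the velocity of `xᵢ` and `x̂ᵢ`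
omits `xᵢ`. The affine part of `vᵢ` is evaluated by the counting identities
`∑ᵢ e_m(x̂ᵢ) = (N - m) e_m(x)` and `∑ᵢ xᵢ e_m(x̂ᵢ) = (m + 1) e_{m+1}(x)`. The singular part is
symmetrized in `(i, j)`: since `e_{m+1}(x̂ᵢ) - e_{m+1}(x̂ⱼ) = (xⱼ - xᵢ) e_m(x̂ᵢⱼ)`, the denominators
cancel and the pair contributes `-(1 - xᵢxⱼ) e_m(x̂ᵢⱼ)`, which the same two identities evaluate.
-/

open Finset

/-- The elementary symmetric polynomial of degree `k` in the variables indexed by `S`. -/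
noncomputable def esym {N : ℕ} (k : ℕ) (S : Finset (Fin N)) (x : Fin N → ℝ) : ℝ :=
  ∑ s ∈ Finset.powersetCard k S, ∏ i ∈ s, x i

theorem Finset.sum_sum_erase_comm {ι M : Type*} [DecidableEq ι] [AddCommMonoid M]
    (S : Finset ι) (f : ι → ι → M) :
    ∑ i ∈ S, ∑ j ∈ S.erase i, f i j = ∑ i ∈ S, ∑ j ∈ S.erase i, f j i :=
  sum_comm' fun _ _ => by simp only [mem_erase]; tauto

theorem Finset.sum_powersetCard_succ_sum_erase {ι M : Type*} [DecidableEq ι] [AddCommMonoid M]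
    (m : ℕ) (S : Finset ι) (g : ι → Finset ι → M) :
    ∑ s ∈ powersetCard (m + 1) S, ∑ i ∈ s, g i (s.erase i)
      = ∑ i ∈ S, ∑ u ∈ powersetCard m (S.erase i), g i u := by
  rw [sum_sigma', sum_sigma']
  refine sum_nbij' (fun p => ⟨p.2, p.1.erase p.2⟩) (fun p => ⟨insert p.1 p.2, p.1⟩)
    ?_ ?_ ?_ ?_ fun _ _ => rfl
  · rintro ⟨s, i⟩ h
    simp only [mem_sigma, mem_powersetCard] at h ⊢
    exact ⟨h.1.1 h.2, erase_subset_erase i h.1.1, by rw [card_erase_of_mem h.2, h.1.2]; rfl⟩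
  · rintro ⟨i, u⟩ h
    simp only [mem_sigma, mem_powersetCard, subset_erase] at h ⊢
    refine ⟨⟨insert_subset h.1 h.2.1.1, ?_⟩, mem_insert_self i u⟩
    rw [card_insert_of_notMem h.2.1.2, h.2.2]
  · rintro ⟨s, i⟩ h
    simp only [mem_sigma] at h
    simp [insert_erase h.2]
  · rintro ⟨i, u⟩ h
    simp only [mem_sigma, mem_powersetCard, subset_erase] at h
    simp [erase_insert h.2.1.2]

variable {N : ℕ}

theorem esym_succ_of_mem (m : ℕ) {S : Finset (Fin N)} {i : Fin N} (hi : i ∈ S)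
    (x : Fin N → ℝ) :
    esym (m + 1) S x = esym (m + 1) (S.erase i) x + x i * esym m (S.erase i) x := by
  have hnotin : ∀ s ∈ powersetCard m (S.erase i), i ∉ s := fun s hs h =>
    notMem_erase i S ((mem_powersetCard.mp hs).1 h)
  conv_lhs => rw [esym, ← insert_erase hi, powersetCard_succ_insert (notMem_erase i S)]
  rw [sum_union, sum_image, esym, esym, mul_sum]
  · exact congrArg _ (sum_congr rfl fun s hs => prod_insert (hnotin s hs))
  · intro s hs u hu h
    rw [← erase_insert (hnotin s hs), ← erase_insert (hnotin u hu)]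
    exact congrArg (·.erase i) h
  · refine disjoint_left.mpr fun s hs hs' => ?_
    obtain ⟨u, -, rfl⟩ := mem_image.mp hs'
    exact notMem_erase i S ((mem_powersetCard.mp hs).1 (mem_insert_self i u))

theorem esym_erase_sub_esym_erase (m : ℕ) {S : Finset (Fin N)} {i j : Fin N} (hi : i ∈ S)
    (hj : j ∈ S) (hij : i ≠ j) (x : Fin N → ℝ) :
    esym (m + 1) (S.erase i) x - esym (m + 1) (S.erase j) x
      = (x j - x i) * esym m ((S.erase i).erase j) x := by
  have hi' := esym_succ_of_mem m (mem_erase.mpr ⟨hij, hi⟩) x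
  have hj' := esym_succ_of_mem m (mem_erase.mpr ⟨hij.symm, hj⟩) x
  rw [erase_right_comm] at hi'
  linear_combination hj' - hi'

theorem sum_esym_erase (m : ℕ) (S : Finset (Fin N)) (x : Fin N → ℝ) :
    ∑ i ∈ S, esym m (S.erase i) x = ((#S : ℝ) - m) * esym m S x := by
  have hpow : ∀ i, powersetCard m (S.erase i) = {s ∈ powersetCard m S | i ∉ s} := fun i => by
    ext s
    simp only [mem_powersetCard, mem_filter, subset_erase]
    tauto
  simp only [esym, hpow]
  rw [sum_comm' (t' := powersetCard m S) (s' := fun s => S \ s)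
    fun i s => by simp only [mem_filter, mem_sdiff]; tauto, mul_sum]
  refine sum_congr rfl fun s hs => ?_
  obtain ⟨hsub, hcard⟩ := mem_powersetCard.mp hs
  rw [sum_const, nsmul_eq_mul, card_sdiff_of_subset hsub, hcard,
    Nat.cast_sub (hcard ▸ card_le_card hsub)]

theorem sum_mul_esym_erase (m : ℕ) (S : Finset (Fin N)) (x : Fin N → ℝ) :
    ∑ i ∈ S, x i * esym m (S.erase i) x = ((m : ℝ) + 1) * esym (m + 1) S x := by
  rw [sum_congr rfl fun i hi => eq_sub_of_add_eq' (esym_succ_of_mem m hi x).symm,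
    sum_sub_distrib, sum_const, nsmul_eq_mul, sum_esym_erase]
  push_cast
  ring

theorem sum_sum_erase_esym_erase_erase (m : ℕ) (S : Finset (Fin N)) (x : Fin N → ℝ) :
    ∑ i ∈ S, ∑ j ∈ S.erase i, esym m ((S.erase i).erase j) x
      = ((#S : ℝ) - m) * (#S - 1 - m) * esym m S x := by
  rw [sum_congr rfl fun i hi => by rw [sum_esym_erase, cast_card_erase_of_mem hi], ← mul_sum,
    sum_esym_erase]
  ring

theorem sum_sum_erase_mul_mul_esym_erase_erase (m : ℕ) (S : Finset (Fin N))
    (x : Fin N → ℝ) :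
    ∑ i ∈ S, ∑ j ∈ S.erase i, x i * x j * esym m ((S.erase i).erase j) x
      = ((m : ℝ) + 2) * (m + 1) * esym (m + 2) S x := by
  have hinner : ∀ i, ∑ j ∈ S.erase i, x i * x j * esym m ((S.erase i).erase j) x
      = ((m : ℝ) + 1) * (x i * esym (m + 1) (S.erase i) x) := fun i => by
    simp only [mul_assoc, ← mul_sum, sum_mul_esym_erase]
    ring
  rw [sum_congr rfl fun i _ => hinner i, ← mul_sum, sum_mul_esym_erase]
  push_cast
  ring

theorem two_mul_sum_sum_erase_div_sub_mul_esym_erase (m : ℕ) (S : Finset (Fin N))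
    (x : Fin N → ℝ) (hx : ∀ i ∈ S, ∀ j ∈ S, i ≠ j → x i ≠ x j) :
    2 * ∑ i ∈ S, (∑ j ∈ S.erase i, (1 - x i * x j) / (x i - x j)) * esym (m + 1) (S.erase i) x
      = ((m : ℝ) + 2) * (m + 1) * esym (m + 2) S x
        - ((#S : ℝ) - m) * (#S - 1 - m) * esym m S x := by
  have hpair : ∀ i ∈ S, ∀ j ∈ S.erase i,
      (1 - x i * x j) / (x i - x j) * esym (m + 1) (S.erase i) x
        + (1 - x j * x i) / (x j - x i) * esym (m + 1) (S.erase j) x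
      = x i * x j * esym m ((S.erase i).erase j) x - esym m ((S.erase i).erase j) x := by
    intro i hi j hj
    obtain ⟨hji, hj⟩ := mem_erase.mp hj
    have hdiff := esym_erase_sub_esym_erase m hi hj hji.symm x
    have hne : x i - x j ≠ 0 := sub_ne_zero.mpr (hx i hi j hj hji.symm)
    rw [← neg_sub (x i), div_neg, mul_comm (x j)]
    field_simp
    linear_combination (1 - x i * x j) * hdiff
  calc 2 * ∑ i ∈ S, (∑ j ∈ S.erase i, (1 - x i * x j) / (x i - x j)) * esym (m + 1) (S.erase i) x
      = ∑ i ∈ S, ∑ j ∈ S.erase i,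
          ((1 - x i * x j) / (x i - x j) * esym (m + 1) (S.erase i) x
            + (1 - x j * x i) / (x j - x i) * esym (m + 1) (S.erase j) x) := by
        simp only [sum_mul, sum_add_distrib]
        rw [two_mul, ← sum_sum_erase_comm S]
    _ = ∑ i ∈ S, ∑ j ∈ S.erase i,
          (x i * x j * esym m ((S.erase i).erase j) x - esym m ((S.erase i).erase j) x) :=
        sum_congr rfl fun i hi => sum_congr rfl (hpair i hi)
    _ = _ := by
        simp only [sum_sub_distrib]
        rw [sum_sum_erase_mul_mul_esym_erase_erase, sum_sum_erase_esym_erase_erase]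

noncomputable def jacobiDrift (p q : ℝ) (S : Finset (Fin N)) (x : Fin N → ℝ) (i : Fin N) : ℝ :=
  (p - q) - (p + q) * x i + 2 * ∑ j ∈ S.erase i, (1 - x i * x j) / (x i - x j)

theorem sum_jacobiDrift_mul_esym_erase (p q : ℝ) (m : ℕ) (S : Finset (Fin N))
    (x : Fin N → ℝ) (hx : ∀ i ∈ S, ∀ j ∈ S, i ≠ j → x i ≠ x j) :
    ∑ i ∈ S, jacobiDrift p q S x i * esym (m + 1) (S.erase i) x
      = ((m : ℝ) + 2) * (-(p + q) + m + 1) * esym (m + 2) S x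
        + ((#S : ℝ) - m - 1) * (p - q) * esym (m + 1) S x
        - ((#S : ℝ) - m) * (#S - m - 1) * esym m S x := by
  have hsplit : ∑ i ∈ S, jacobiDrift p q S x i * esym (m + 1) (S.erase i) x
      = (p - q) * ∑ i ∈ S, esym (m + 1) (S.erase i) x
        - (p + q) * ∑ i ∈ S, x i * esym (m + 1) (S.erase i) x
        + 2 * ∑ i ∈ S, (∑ j ∈ S.erase i, (1 - x i * x j) / (x i - x j))
            * esym (m + 1) (S.erase i) x := by
    simp only [mul_sum, ← sum_sub_distrib, ← sum_add_distrib]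
    exact sum_congr rfl fun i _ => by rw [jacobiDrift]; ring
  rw [hsplit, two_mul_sum_sum_erase_div_sub_mul_esym_erase m S x hx, sum_esym_erase,
    sum_mul_esym_erase]
  push_cast
  ring

theorem hasDerivAt_esym {x : ℝ → Fin N → ℝ} {v : Fin N → ℝ} {t : ℝ} (m : ℕ)
    (S : Finset (Fin N)) (hx : ∀ i ∈ S, HasDerivAt (fun s => x s i) (v i) t) :
    HasDerivAt (fun s => esym (m + 1) S (x s)) (∑ i ∈ S, v i * esym m (S.erase i) (x t)) t := by
  have hprod : ∀ s ∈ powersetCard (m + 1) S, HasDerivAt (fun τ => ∏ i ∈ s, x τ i)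
      (∑ i ∈ s, v i * ∏ j ∈ s.erase i, x t j) t := fun s hs => by
    simpa only [smul_eq_mul, mul_comm _ (v _)] using
      HasDerivAt.fun_finsetProd fun i hi => hx i ((mem_powersetCard.mp hs).1 hi)
  simpa only [esym, sum_powersetCard_succ_sum_erase m S fun i u => v i * ∏ j ∈ u, x t j,
    ← mul_sum] using HasDerivAt.fun_sum hprod

theorem stmt5_general {N : ℕ} (p q T : ℝ) (k : ℕ) (hk2 : 2 ≤ k) (x : ℝ → Fin N → ℝ)
    (hdist : ∀ t ∈ Set.Ico (0 : ℝ) T, ∀ i j : Fin N, i ≠ j → x t i ≠ x t j)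
    (hODE : ∀ t ∈ Set.Ico (0 : ℝ) T, ∀ i : Fin N,
      HasDerivAt (fun s => x s i)
        ((p - q) - (p + q) * x t i
          + 2 * ∑ j ∈ (univ : Finset (Fin N)).erase i,
              (1 - x t i * x t j) / (x t i - x t j)) t) :
    ∀ t ∈ Set.Ico (0 : ℝ) T,
      HasDerivAt (fun s => esym k univ (x s))
        ((k : ℝ) * (-(p + q) + k - 1) * esym k univ (x t)
          + ((N : ℝ) - k + 1) * (p - q) * esym (k - 1) univ (x t)
          - ((N : ℝ) - k + 2) * ((N : ℝ) - k + 1) * esym (k - 2) univ (x t)) t := by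
  intro t ht
  obtain ⟨m, rfl⟩ : ∃ m, k = m + 2 := ⟨k - 2, by omega⟩
  have hderiv := hasDerivAt_esym (v := jacobiDrift p q univ (x t)) (m + 1) univ
    fun i _ => hODE t ht i
  rw [sum_jacobiDrift_mul_esym_erase p q m univ (x t) fun i _ j _ => hdist t ht i j,
    card_univ, Fintype.card_fin] at hderiv
  convert hderiv using 1
  simp only [Nat.add_sub_cancel]
  push_cast
  ring

theorem stmt5 {N : ℕ} (p q T : ℝ) (hp : (N : ℝ) - 1 < p) (hq : (N : ℝ) - 1 < q)
    (hT : 0 < T) (k : ℕ) (hk2 : 2 ≤ k) (hkN : k ≤ N) (x : ℝ → Fin N → ℝ)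
    (hdist : ∀ t ∈ Set.Ico (0 : ℝ) T, ∀ i j : Fin N, i ≠ j → x t i ≠ x t j)
    (hODE : ∀ t ∈ Set.Ico (0 : ℝ) T, ∀ i : Fin N,
      HasDerivAt (fun s => x s i)
        ((p - q) - (p + q) * x t i
          + 2 * ∑ j ∈ (univ : Finset (Fin N)).erase i,
              (1 - x t i * x t j) / (x t i - x t j)) t) :
    ∀ t ∈ Set.Ico (0 : ℝ) T,
      HasDerivAt (fun s => esym k univ (x s))
        ((k : ℝ) * (-(p + q) + k - 1) * esym k univ (x t)
          + ((N : ℝ) - k + 1) * (p - q) * esym (k - 1) univ (x t)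
          - ((N : ℝ) - k + 2) * ((N : ℝ) - k + 1) * esym (k - 2) univ (x t)) t :=
  stmt5_general p q T k hk2 x hdist hODE
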